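/- arXiv:1701.05759 — 3 statements merged into one kernel-verified Lean document; each statement's English description precedes it below -/
import Mathlib

section
/- With V, b, h, m, the tropes and the linear map θ as in the context: θ(h) = h and θ(m) = m; moreover θ(m) = ℓ + t_6 + t_1 + t_{246} + t_{356}, i.e., ℓ + t_6 + t_1 + t_{246} + t_{356} = m. -/
/-- Index type for the standard basis of the 17-dimensional `ℚ`-vector space
`V`: the quartic hyperplane class `ℓ` and the sixteen *nodes* `e₀` and
`e_{ij}` (`1 ≤ i < j ≤ 6`) of the Kummer surface of a Jacobian. -/
inductive Idx : Type
  | ell | e0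
  | e12 | e13 | e14 | e15 | e16
  | e23 | e24 | e25 | e26
  | e34 | e35 | e36
  | e45 | e46
  | e56
  deriving DecidableEq

open Idx

/-- `V` is the 17-dimensional `ℚ`-vector space with basis indexed by `Idx`. -/
abbrev V : Type := Idx → ℚ

/-- The standard basis vectors of `V` (the classes `ℓ`, `e₀`, `e_{ij}`). -/
def bv (i : Idx) : V := fun j => if j = i then 1 else 0

/-- The symmetric bilinear form `b` on `V` determined on the basis by
`b(ℓ,ℓ) = 4`, `b(ℓ,e) = 0` for every node `e`, `b(e,e) = -2` for every node
`e`, and `b(e,e') = 0` for distinct nodes `e`, `e'`. -/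
def b (x y : V) : ℚ :=
  4 * x ell * y ell -
    2 * (x e0 * y e0 + x e12 * y e12 + x e13 * y e13 + x e14 * y e14 +
      x e15 * y e15 + x e16 * y e16 + x e23 * y e23 + x e24 * y e24 +
      x e25 * y e25 + x e26 * y e26 + x e34 * y e34 + x e35 * y e35 +
      x e36 * y e36 + x e45 * y e45 + x e46 * y e46 + x e56 * y e56)

/-- The sum `e₀ + Σ_{1 ≤ i < j ≤ 6} e_{ij}` of the sixteen nodes. -/
def sumNodes : V :=
  bv e0 + bv e12 + bv e13 + bv e14 + bv e15 + bv e16 + bv e23 + bv e24 +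
    bv e25 + bv e26 + bv e34 + bv e35 + bv e36 + bv e45 + bv e46 + bv e56

/-- The degree-8 polarization class `h = 2ℓ - ½(e₀ + Σ e_{ij})`. -/
def hcl : V := (2 : ℚ) • bv ell - (1/2 : ℚ) • sumNodes

/-- The candidate Ulrich class
`m = 3ℓ - (e₀ + e₁₆ + e₂₆ + e₃₆ + e₄₆ + e₅₆ + e₁₂ + e₁₃ + e₁₄ + e₁₅ + e₂₄ + e₃₅)`. -/
def mcl : V :=
  (3 : ℚ) • bv ell -
    (bv e0 + bv e16 + bv e26 + bv e36 + bv e46 + bv e56 +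
      bv e12 + bv e13 + bv e14 + bv e15 + bv e24 + bv e35)

/-! The sixteen *tropes* `t_i = ½(ℓ - e₀ - Σ_{k ≠ i} e_{ik})` for
`1 ≤ i ≤ 6` and `t_{ij6} = ½(ℓ - e_{i6} - e_{j6} - e_{ij} - e_{lm} - e_{ln} -
e_{mn})` for `1 ≤ i < j ≤ 5`, where `{l, m, n} = {1,…,5} \ {i, j}`. -/

def t1 : V := (1/2 : ℚ) • (bv ell - bv e0 - bv e12 - bv e13 - bv e14 - bv e15 - bv e16)
def t2 : V := (1/2 : ℚ) • (bv ell - bv e0 - bv e12 - bv e23 - bv e24 - bv e25 - bv e26)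
def t3 : V := (1/2 : ℚ) • (bv ell - bv e0 - bv e13 - bv e23 - bv e34 - bv e35 - bv e36)
def t4 : V := (1/2 : ℚ) • (bv ell - bv e0 - bv e14 - bv e24 - bv e34 - bv e45 - bv e46)
def t5 : V := (1/2 : ℚ) • (bv ell - bv e0 - bv e15 - bv e25 - bv e35 - bv e45 - bv e56)
def t6 : V := (1/2 : ℚ) • (bv ell - bv e0 - bv e16 - bv e26 - bv e36 - bv e46 - bv e56)
def t126 : V := (1/2 : ℚ) • (bv ell - bv e16 - bv e26 - bv e12 - bv e34 - bv e35 - bv e45)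
def t136 : V := (1/2 : ℚ) • (bv ell - bv e16 - bv e36 - bv e13 - bv e24 - bv e25 - bv e45)
def t146 : V := (1/2 : ℚ) • (bv ell - bv e16 - bv e46 - bv e14 - bv e23 - bv e25 - bv e35)
def t156 : V := (1/2 : ℚ) • (bv ell - bv e16 - bv e56 - bv e15 - bv e23 - bv e24 - bv e34)
def t236 : V := (1/2 : ℚ) • (bv ell - bv e26 - bv e36 - bv e23 - bv e14 - bv e15 - bv e45)
def t246 : V := (1/2 : ℚ) • (bv ell - bv e26 - bv e46 - bv e24 - bv e13 - bv e15 - bv e35)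
def t256 : V := (1/2 : ℚ) • (bv ell - bv e26 - bv e56 - bv e25 - bv e13 - bv e14 - bv e34)
def t346 : V := (1/2 : ℚ) • (bv ell - bv e36 - bv e46 - bv e34 - bv e12 - bv e15 - bv e25)
def t356 : V := (1/2 : ℚ) • (bv ell - bv e36 - bv e56 - bv e35 - bv e12 - bv e14 - bv e24)
def t456 : V := (1/2 : ℚ) • (bv ell - bv e46 - bv e56 - bv e45 - bv e12 - bv e13 - bv e23)

/-- A linear map `θ : V → V` acts by the *switch table* of the even theta
characteristic `[p₄ + p₅ - p₆]` if it sends `ℓ ↦ 3ℓ - e₀ - Σ e_{ij}` and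
swaps each node with the corresponding trope as in the table of
Aprodu–Kim/Ohashi. -/
def IsSwitch (θ : V →ₗ[ℚ] V) : Prop :=
  θ (bv ell) = (3 : ℚ) • bv ell - sumNodes ∧
  θ (bv e0) = t456 ∧ θ (bv e12) = t3 ∧ θ (bv e13) = t2 ∧ θ (bv e14) = t156 ∧
  θ (bv e15) = t146 ∧ θ (bv e16) = t236 ∧ θ (bv e23) = t1 ∧ θ (bv e24) = t256 ∧
  θ (bv e25) = t246 ∧ θ (bv e26) = t136 ∧ θ (bv e34) = t356 ∧ θ (bv e35) = t346 ∧
  θ (bv e36) = t126 ∧ θ (bv e45) = t6 ∧ θ (bv e46) = t5 ∧ θ (bv e56) = t4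

set_option maxHeartbeats 2000000 in
/-- The switch involution `θ` fixes both the degree-8
polarization `h` and the candidate Ulrich class `m`; moreover
`θ(m) = ℓ + t₆ + t₁ + t₂₄₆ + t₃₅₆`, i.e.
`ℓ + t₆ + t₁ + t₂₄₆ + t₃₅₆ = m`. -/
theorem switch_fixes_h_and_m (θ : V →ₗ[ℚ] V) (hθ : IsSwitch θ) :
    θ hcl = hcl ∧ θ mcl = mcl ∧
    θ mcl = bv Idx.ell + t6 + t1 + t246 + t356 ∧
    bv Idx.ell + t6 + t1 + t246 + t356 = mcl := by

  obtain ⟨h0, h1, h2, h3, h4, h5, h6, h7, h8, h9, h10, h11, h12, h13, h14, h15, h16⟩ := hθ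
  have hm : mcl = (3 : ℚ) • bv ell -
      (bv e0 + bv e16 + bv e26 + bv e36 + bv e46 + bv e56 +
        bv e12 + bv e13 + bv e14 + bv e15 + bv e24 + bv e35) := rfl
  have hh : hcl = (2 : ℚ) • bv ell - (1/2 : ℚ) • (bv e0 + bv e12 + bv e13 + bv e14 +
      bv e15 + bv e16 + bv e23 + bv e24 + bv e25 + bv e26 + bv e34 + bv e35 + bv e36 +
      bv e45 + bv e46 + bv e56) := rfl
  have H1 : θ hcl = hcl := by
    rw [hh]
    simp only [map_sub, map_smul, map_add, h0, h1, h2, h3, h4, h5, h6, h7, h8, h9, h10,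
      h11, h12, h13, h14, h15, h16]
    funext i
    cases i <;>
      (simp [hcl, sumNodes, bv, t1, t2, t3, t4, t5, t6, t126, t136, t146, t156,
        t236, t246, t256, t346, t356, t456, Pi.add_apply, Pi.sub_apply, Pi.smul_apply,
        smul_eq_mul]; try norm_num)
  have H2 : θ mcl = mcl := by
    rw [hm]
    simp only [map_sub, map_smul, map_add, h0, h1, h2, h3, h4, h5, h6, h7, h8, h9, h10,
      h11, h12, h13, h14, h15, h16]
    funext i
    cases i <;>
      (simp [mcl, sumNodes, bv, t1, t2, t3, t4, t5, t6, t126, t136, t146, t156,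
        t236, t246, t256, t346, t356, t456, Pi.add_apply, Pi.sub_apply, Pi.smul_apply,
        smul_eq_mul]; try norm_num)
  have H4 : bv Idx.ell + t6 + t1 + t246 + t356 = mcl := by
    funext i
    cases i <;>
      (simp [mcl, bv, t1, t6, t246, t356, Pi.add_apply, Pi.sub_apply, Pi.smul_apply,
        smul_eq_mul]; try norm_num)
  exact ⟨H1, H2, H2.trans H4.symm, H4⟩
end

section
/- With V, b and the tropes as in the context: if φ : V → V is any linear map satisfying φ ∘ φ = id_V and sending the sixteen nodes according to the switch table (φ(e_0) = t_{456}, φ(e_{12}) = t_3, φ(e_{13}) = t_2, φ(e_{14}) = t_{156}, φ(e_{15}) = t_{146}, φ(e_{16}) = t_{236}, φ(e_{23}) = t_1, φ(e_{24}) = t_{256}, φ(e_{25}) = t_{246}, φ(e_{26}) = t_{136}, φ(e_{34}) = t_{356}, φ(e_{35}) = t_{346}, φ(e_{36}) = t_{126}, φ(e_{45}) = t_6, φ(e_{46}) = t_5, φ(e_{56}) = t_4), then necessarily φ(ℓ) = 3ℓ - e_0 - Σ_{1≤i<j≤6} e_{ij}. (In particular one has the identity ℓ = 2t_6 + e_0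 + e_{16} + e_{26} + e_{36} + e_{46} + e_{56} in V.) -/
open Idx

/-- If `φ : V → V` is any linear involution sending the
sixteen nodes according to the switch table, then necessarily
`φ(ℓ) = 3ℓ - e₀ - Σ_{1≤i<j≤6} e_{ij}`.  (In particular one has the identity
`ℓ = 2t₆ + e₀ + e₁₆ + e₂₆ + e₃₆ + e₄₆ + e₅₆` in `V`.) -/
theorem switch_determines_image_of_ell (φ : V →ₗ[ℚ] V)
    (hinv : φ ∘ₗ φ = LinearMap.id)
    (h0 : φ (bv e0) = t456) (h12 : φ (bv e12) = t3) (h13 : φ (bv e13) = t2)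
    (h14 : φ (bv e14) = t156) (h15 : φ (bv e15) = t146)
    (h16 : φ (bv e16) = t236) (h23 : φ (bv e23) = t1)
    (h24 : φ (bv e24) = t256) (h25 : φ (bv e25) = t246)
    (h26 : φ (bv e26) = t136) (h34 : φ (bv e34) = t356)
    (h35 : φ (bv e35) = t346) (h36 : φ (bv e36) = t126)
    (h45 : φ (bv e45) = t6) (h46 : φ (bv e46) = t5)
    (h56 : φ (bv e56) = t4) :
    φ (bv ell) = (3 : ℚ) • bv ell - sumNodes ∧
    bv ell = (2 : ℚ) • t6 + bv e0 + bv e16 + bv e26 + bv e36 + bv e46 + bv e56 := by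
  have key : bv ell = (2 : ℚ) • t6 + bv e0 + bv e16 + bv e26 + bv e36 + bv e46 + bv e56 := by
    funext i
    cases i <;> simp [t6, bv, sumNodes] <;> norm_num
  refine ⟨?_, key⟩
  have ht6 : φ t6 = bv e45 := by
    have := congrArg (fun f => f (bv e45)) hinv
    simpa [LinearMap.comp_apply, h45] using this
  conv_lhs => rw [key]
  simp only [map_add, map_smul, h0, h16, h26, h36, h46, h56, ht6]
  funext i
  cases i <;> simp [t4, t5, t126, t136, t236, t456, bv, sumNodes] <;> norm_num
end

section
/- Let F = 𝔽_{32003} be the prime field with 32003 elements. The only homogeneous polynomial of degree 2 in F[X, Y, Z, W] vanishing at all twelve vectors (0, 0, 0, 1), (-3556, 0, 1, 14238), (-1, 0, 1, 50), (-16001, -16000, 1, 14), (-10668, -10667, 1, 14), (-10668, 10667, 1, 14), (-5334, 5334, 1, 14), (10668, 10669, 1, 2), (10668, -10669, 1, 2), (5334, 5333, 1, -10), (5334, -5333, 1, -10), (16001, -16001, 1, 22) in F^4 is the zero polynomial; equivalently, the evaluation map at these twelve points from the 10-dimensional space of quadratic forms in X, Y, Z, W over F to F^{12} is injective. -/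
open MvPolynomial

/-- The coordinate vectors in `𝔽₃₂₀₀₃⁴` of the twelve nodes of the Kummer
quartic complementary to the four chosen nodes. -/
def twelveNodes : List (Fin 4 → ZMod 32003) :=
  [![0, 0, 0, 1],
   ![-3556, 0, 1, 14238],
   ![-1, 0, 1, 50],
   ![-16001, -16000, 1, 14],
   ![-10668, -10667, 1, 14],
   ![-10668, 10667, 1, 14],
   ![-5334, 5334, 1, 14],
   ![10668, 10669, 1, 2],
   ![10668, -10669, 1, 2],
   ![5334, 5333, 1, -10],
   ![5334, -5333, 1, -10],
   ![16001, -16001, 1, 22]]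

/-- Encode a function `Fin 4 → ℕ` as a finitely supported function. -/
noncomputable def Mex (f : Fin 4 → ℕ) : Fin 4 →₀ ℕ := Finsupp.equivFunOnFinite.symm f

lemma classify (d : Fin 4 →₀ ℕ) (h : d.degree = 2) :
    d = Mex ![2,0,0,0] ∨ d = Mex ![1,1,0,0] ∨ d = Mex ![1,0,1,0] ∨ d = Mex ![1,0,0,1] ∨
    d = Mex ![0,2,0,0] ∨ d = Mex ![0,1,1,0] ∨ d = Mex ![0,1,0,1] ∨ d = Mex ![0,0,2,0] ∨
    d = Mex ![0,0,1,1] ∨ d = Mex ![0,0,0,2] := by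
  have hsum : d 0 + d 1 + d 2 + d 3 = 2 := by
    have h2 : d.degree = ∑ i : Fin 4, d i := by
      rw [Finsupp.degree]
      exact Finset.sum_subset (Finset.subset_univ _)
        (fun i _ hi => Finsupp.notMem_support_iff.mp hi)
    rw [h2, Fin.sum_univ_four] at h
    exact h
  have hd : d = Mex ![d 0, d 1, d 2, d 3] := by
    rw [show ![d 0, d 1, d 2, d 3] = ⇑d by funext i; fin_cases i <;> rfl]
    exact (Finsupp.equivFunOnFinite.symm_apply_apply d).symm
  set a := d 0 with ha
  set b := d 1 with hb
  set c := d 2 with hc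
  set e := d 3 with he
  clear_value a b c e
  have h0 : a ≤ 2 := by omega
  have h1 : b ≤ 2 := by omega
  have h2 : c ≤ 2 := by omega
  have h3 : e ≤ 2 := by omega
  clear ha hb hc he
  subst hd
  interval_cases a <;> interval_cases b <;> interval_cases c <;> interval_cases e <;>
    first | omega | tauto

lemma sum_S {β : Type*} [AddCommMonoid β] (g : (Fin 4 →₀ ℕ) → β) :
    ∑ d ∈ ({Mex ![2,0,0,0], Mex ![1,1,0,0], Mex ![1,0,1,0], Mex ![1,0,0,1], Mex ![0,2,0,0], Mex ![0,1,1,0], Mex ![0,1,0,1], Mex ![0,0,2,0], Mex ![0,0,1,1], Mex ![0,0,0,2]} : Finset _), g d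
      = g (Mex ![2,0,0,0]) + g (Mex ![1,1,0,0]) + g (Mex ![1,0,1,0]) + g (Mex ![1,0,0,1]) + g (Mex ![0,2,0,0]) + g (Mex ![0,1,1,0]) + g (Mex ![0,1,0,1]) + g (Mex ![0,0,2,0]) + g (Mex ![0,0,1,1]) + g (Mex ![0,0,0,2]) := by
  simp (config := { decide := true }) [Finset.sum_insert, Finset.mem_insert, Finset.mem_singleton,
    Mex, Finsupp.equivFunOnFinite.symm.injective.eq_iff, add_assoc]

lemma hev0 (v : Fin 4 → ZMod 32003) (a : ZMod 32003) :
    eval v (monomial (Mex ![2,0,0,0]) a) = a * (v 0 * v 0) := by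
  rw [eval_monomial, Finsupp.prod_fintype _ _ (fun i => pow_zero _), Fin.prod_univ_four]
  show a * (v 0 ^ 2 * v 1 ^ 0 * v 2 ^ 0 * v 3 ^ 0) = a * (v 0 * v 0)
  ring

lemma hev1 (v : Fin 4 → ZMod 32003) (a : ZMod 32003) :
    eval v (monomial (Mex ![1,1,0,0]) a) = a * (v 0 * v 1) := by
  rw [eval_monomial, Finsupp.prod_fintype _ _ (fun i => pow_zero _), Fin.prod_univ_four]
  show a * (v 0 ^ 1 * v 1 ^ 1 * v 2 ^ 0 * v 3 ^ 0) = a * (v 0 * v 1)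
  ring

lemma hev2 (v : Fin 4 → ZMod 32003) (a : ZMod 32003) :
    eval v (monomial (Mex ![1,0,1,0]) a) = a * (v 0 * v 2) := by
  rw [eval_monomial, Finsupp.prod_fintype _ _ (fun i => pow_zero _), Fin.prod_univ_four]
  show a * (v 0 ^ 1 * v 1 ^ 0 * v 2 ^ 1 * v 3 ^ 0) = a * (v 0 * v 2)
  ring

lemma hev3 (v : Fin 4 → ZMod 32003) (a : ZMod 32003) :
    eval v (monomial (Mex ![1,0,0,1]) a) = a * (v 0 * v 3) := by
  rw [eval_monomial, Finsupp.prod_fintype _ _ (fun i => pow_zero _), Fin.prod_univ_four]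
  show a * (v 0 ^ 1 * v 1 ^ 0 * v 2 ^ 0 * v 3 ^ 1) = a * (v 0 * v 3)
  ring

lemma hev4 (v : Fin 4 → ZMod 32003) (a : ZMod 32003) :
    eval v (monomial (Mex ![0,2,0,0]) a) = a * (v 1 * v 1) := by
  rw [eval_monomial, Finsupp.prod_fintype _ _ (fun i => pow_zero _), Fin.prod_univ_four]
  show a * (v 0 ^ 0 * v 1 ^ 2 * v 2 ^ 0 * v 3 ^ 0) = a * (v 1 * v 1)
  ring

lemma hev5 (v : Fin 4 → ZMod 32003) (a : ZMod 32003) :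
    eval v (monomial (Mex ![0,1,1,0]) a) = a * (v 1 * v 2) := by
  rw [eval_monomial, Finsupp.prod_fintype _ _ (fun i => pow_zero _), Fin.prod_univ_four]
  show a * (v 0 ^ 0 * v 1 ^ 1 * v 2 ^ 1 * v 3 ^ 0) = a * (v 1 * v 2)
  ring

lemma hev6 (v : Fin 4 → ZMod 32003) (a : ZMod 32003) :
    eval v (monomial (Mex ![0,1,0,1]) a) = a * (v 1 * v 3) := by
  rw [eval_monomial, Finsupp.prod_fintype _ _ (fun i => pow_zero _), Fin.prod_univ_four]
  show a * (v 0 ^ 0 * v 1 ^ 1 * v 2 ^ 0 * v 3 ^ 1) = a * (v 1 * v 3)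
  ring

lemma hev7 (v : Fin 4 → ZMod 32003) (a : ZMod 32003) :
    eval v (monomial (Mex ![0,0,2,0]) a) = a * (v 2 * v 2) := by
  rw [eval_monomial, Finsupp.prod_fintype _ _ (fun i => pow_zero _), Fin.prod_univ_four]
  show a * (v 0 ^ 0 * v 1 ^ 0 * v 2 ^ 2 * v 3 ^ 0) = a * (v 2 * v 2)
  ring

lemma hev8 (v : Fin 4 → ZMod 32003) (a : ZMod 32003) :
    eval v (monomial (Mex ![0,0,1,1]) a) = a * (v 2 * v 3) := by
  rw [eval_monomial, Finsupp.prod_fintype _ _ (fun i => pow_zero _), Fin.prod_univ_four]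
  show a * (v 0 ^ 0 * v 1 ^ 0 * v 2 ^ 1 * v 3 ^ 1) = a * (v 2 * v 3)
  ring

lemma hev9 (v : Fin 4 → ZMod 32003) (a : ZMod 32003) :
    eval v (monomial (Mex ![0,0,0,2]) a) = a * (v 3 * v 3) := by
  rw [eval_monomial, Finsupp.prod_fintype _ _ (fun i => pow_zero _), Fin.prod_univ_four]
  show a * (v 0 ^ 0 * v 1 ^ 0 * v 2 ^ 0 * v 3 ^ 2) = a * (v 3 * v 3)
  ring

/-- Over `F = 𝔽₃₂₀₀₃`, the only homogeneous polynomial of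
degree 2 in `F[X, Y, Z, W]` vanishing at all twelve complementary nodes is
the zero polynomial (no quadric passes through the twelve nodes, i.e.
`h⁰ = 0` for `|2(M - H_X)|`); equivalently, the evaluation map at these
twelve points, from the 10-dimensional space of quadratic forms to `F¹²`,
is injective. -/
theorem no_quadric_through_twelve_nodes
    (p : MvPolynomial (Fin 4) (ZMod 32003)) (hp : p.IsHomogeneous 2)
    (hvan : ∀ v ∈ twelveNodes, eval v p = 0) :
    p = 0 := by
  have hsub : p.support ⊆ ({Mex ![2,0,0,0], Mex ![1,1,0,0], Mex ![1,0,1,0], Mex ![1,0,0,1], Mex ![0,2,0,0], Mex ![0,1,1,0], Mex ![0,1,0,1], Mex ![0,0,2,0], Mex ![0,0,1,1], Mex ![0,0,0,2]} : Finset (Fin 4 →₀ ℕ)) := by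
    intro d hd
    have hdeg : d.degree = 2 := by
      rw [Finsupp.degree_eq_weight_one]
      exact hp (MvPolynomial.mem_support_iff.mp hd)
    have := classify d hdeg
    simp only [Finset.mem_insert, Finset.mem_singleton]
    tauto
  have hrep : p = ∑ d ∈ ({Mex ![2,0,0,0], Mex ![1,1,0,0], Mex ![1,0,1,0], Mex ![1,0,0,1], Mex ![0,2,0,0], Mex ![0,1,1,0], Mex ![0,1,0,1], Mex ![0,0,2,0], Mex ![0,0,1,1], Mex ![0,0,0,2]} : Finset (Fin 4 →₀ ℕ)), monomial d (coeff d p) := by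
    conv_lhs => rw [p.as_sum]
    exact Finset.sum_subset hsub (fun d _ hd => by
      rw [MvPolynomial.notMem_support_iff.mp hd, monomial_zero])
  rw [sum_S] at hrep
  set c0 := coeff (Mex ![2,0,0,0]) p with hc0
  set c1 := coeff (Mex ![1,1,0,0]) p with hc1
  set c2 := coeff (Mex ![1,0,1,0]) p with hc2
  set c3 := coeff (Mex ![1,0,0,1]) p with hc3
  set c4 := coeff (Mex ![0,2,0,0]) p with hc4
  set c5 := coeff (Mex ![0,1,1,0]) p with hc5
  set c6 := coeff (Mex ![0,1,0,1]) p with hc6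
  set c7 := coeff (Mex ![0,0,2,0]) p with hc7
  set c8 := coeff (Mex ![0,0,1,1]) p with hc8
  set c9 := coeff (Mex ![0,0,0,2]) p with hc9
  clear_value c0 c1 c2 c3 c4 c5 c6 c7 c8 c9
  have evalrep : ∀ v : Fin 4 → ZMod 32003, eval v p = c0 * (v 0 * v 0) + c1 * (v 0 * v 1) + c2 * (v 0 * v 2) + c3 * (v 0 * v 3) + c4 * (v 1 * v 1) + c5 * (v 1 * v 2) + c6 * (v 1 * v 3) + c7 * (v 2 * v 2) + c8 * (v 2 * v 3) + c9 * (v 3 * v 3) := by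
    intro v
    rw [hrep]
    simp only [map_add, hev0, hev1, hev2, hev3, hev4, hev5, hev6, hev7, hev8, hev9]
  have E0 : c0 * (0 * 0 : ZMod 32003) + c1 * (0 * 0 : ZMod 32003) + c2 * (0 * 0 : ZMod 32003) + c3 * (0 * 1 : ZMod 32003) + c4 * (0 * 0 : ZMod 32003) + c5 * (0 * 0 : ZMod 32003) + c6 * (0 * 1 : ZMod 32003) + c7 * (0 * 0 : ZMod 32003) + c8 * (0 * 1 : ZMod 32003) + c9 * (1 * 1 : ZMod 32003) = 0 := by
    have h := hvan ![0, 0, 0, 1] (by simp [twelveNodes])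
    rw [evalrep] at h
    exact h
  have E1 : c0 * ((-3556) * (-3556) : ZMod 32003) + c1 * ((-3556) * 0 : ZMod 32003) + c2 * ((-3556) * 1 : ZMod 32003) + c3 * ((-3556) * 14238 : ZMod 32003) + c4 * (0 * 0 : ZMod 32003) + c5 * (0 * 1 : ZMod 32003) + c6 * (0 * 14238 : ZMod 32003) + c7 * (1 * 1 : ZMod 32003) + c8 * (1 * 14238 : ZMod 32003) + c9 * (14238 * 14238 : ZMod 32003) = 0 := by
    have h := hvan ![(-3556), 0, 1, 14238] (by simp [twelveNodes])
    rw [evalrep] at h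
    exact h
  have E2 : c0 * ((-1) * (-1) : ZMod 32003) + c1 * ((-1) * 0 : ZMod 32003) + c2 * ((-1) * 1 : ZMod 32003) + c3 * ((-1) * 50 : ZMod 32003) + c4 * (0 * 0 : ZMod 32003) + c5 * (0 * 1 : ZMod 32003) + c6 * (0 * 50 : ZMod 32003) + c7 * (1 * 1 : ZMod 32003) + c8 * (1 * 50 : ZMod 32003) + c9 * (50 * 50 : ZMod 32003) = 0 := by
    have h := hvan ![(-1), 0, 1, 50] (by simp [twelveNodes])
    rw [evalrep] at h
    exact h
  have E3 : c0 * ((-16001) * (-16001) : ZMod 32003) + c1 * ((-16001) * (-16000) : ZMod 32003) + c2 * ((-16001) * 1 : ZMod 32003) + c3 * ((-16001) * 14 : ZMod 32003) + c4 * ((-16000) * (-16000) : ZMod 32003) + c5 * ((-16000) * 1 : ZMod 32003) + c6 * ((-16000) * 14 : ZMod 32003) + c7 * (1 * 1 : ZMod 32003) + c8 * (1 * 14 : ZMod 32003) + c9 * (14 * 14 : ZMod 32003) = 0 := by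
    have h := hvan ![(-16001), (-16000), 1, 14] (by simp [twelveNodes])
    rw [evalrep] at h
    exact h
  have E4 : c0 * ((-10668) * (-10668) : ZMod 32003) + c1 * ((-10668) * (-10667) : ZMod 32003) + c2 * ((-10668) * 1 : ZMod 32003) + c3 * ((-10668) * 14 : ZMod 32003) + c4 * ((-10667) * (-10667) : ZMod 32003) + c5 * ((-10667) * 1 : ZMod 32003) + c6 * ((-10667) * 14 : ZMod 32003) + c7 * (1 * 1 : ZMod 32003) + c8 * (1 * 14 : ZMod 32003) + c9 * (14 * 14 : ZMod 32003) = 0 := by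
    have h := hvan ![(-10668), (-10667), 1, 14] (by simp [twelveNodes])
    rw [evalrep] at h
    exact h
  have E5 : c0 * ((-10668) * (-10668) : ZMod 32003) + c1 * ((-10668) * 10667 : ZMod 32003) + c2 * ((-10668) * 1 : ZMod 32003) + c3 * ((-10668) * 14 : ZMod 32003) + c4 * (10667 * 10667 : ZMod 32003) + c5 * (10667 * 1 : ZMod 32003) + c6 * (10667 * 14 : ZMod 32003) + c7 * (1 * 1 : ZMod 32003) + c8 * (1 * 14 : ZMod 32003) + c9 * (14 * 14 : ZMod 32003) = 0 := by
    have h := hvan ![(-10668), 10667, 1, 14] (by simp [twelveNodes])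
    rw [evalrep] at h
    exact h
  have E6 : c0 * ((-5334) * (-5334) : ZMod 32003) + c1 * ((-5334) * 5334 : ZMod 32003) + c2 * ((-5334) * 1 : ZMod 32003) + c3 * ((-5334) * 14 : ZMod 32003) + c4 * (5334 * 5334 : ZMod 32003) + c5 * (5334 * 1 : ZMod 32003) + c6 * (5334 * 14 : ZMod 32003) + c7 * (1 * 1 : ZMod 32003) + c8 * (1 * 14 : ZMod 32003) + c9 * (14 * 14 : ZMod 32003) = 0 := by
    have h := hvan ![(-5334), 5334, 1, 14] (by simp [twelveNodes])
    rw [evalrep] at h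
    exact h
  have E7 : c0 * (10668 * 10668 : ZMod 32003) + c1 * (10668 * 10669 : ZMod 32003) + c2 * (10668 * 1 : ZMod 32003) + c3 * (10668 * 2 : ZMod 32003) + c4 * (10669 * 10669 : ZMod 32003) + c5 * (10669 * 1 : ZMod 32003) + c6 * (10669 * 2 : ZMod 32003) + c7 * (1 * 1 : ZMod 32003) + c8 * (1 * 2 : ZMod 32003) + c9 * (2 * 2 : ZMod 32003) = 0 := by
    have h := hvan ![10668, 10669, 1, 2] (by simp [twelveNodes])
    rw [evalrep] at h
    exact h
  have E8 : c0 * (10668 * 10668 : ZMod 32003) + c1 * (10668 * (-10669) : ZMod 32003) + c2 * (10668 * 1 : ZMod 32003) + c3 * (10668 * 2 : ZMod 32003) + c4 * ((-10669) * (-10669) : ZMod 32003) + c5 * ((-10669) * 1 : ZMod 32003) + c6 * ((-10669) * 2 : ZMod 32003) + c7 * (1 * 1 : ZMod 32003) + c8 * (1 * 2 : ZMod 32003) + c9 * (2 * 2 : ZMod 32003) = 0 := by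
    have h := hvan ![10668, (-10669), 1, 2] (by simp [twelveNodes])
    rw [evalrep] at h
    exact h
  have E9 : c0 * (5334 * 5334 : ZMod 32003) + c1 * (5334 * 5333 : ZMod 32003) + c2 * (5334 * 1 : ZMod 32003) + c3 * (5334 * (-10) : ZMod 32003) + c4 * (5333 * 5333 : ZMod 32003) + c5 * (5333 * 1 : ZMod 32003) + c6 * (5333 * (-10) : ZMod 32003) + c7 * (1 * 1 : ZMod 32003) + c8 * (1 * (-10) : ZMod 32003) + c9 * ((-10) * (-10) : ZMod 32003) = 0 := by
    have h := hvan ![5334, 5333, 1, (-10)] (by simp [twelveNodes])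
    rw [evalrep] at h
    exact h
  have E10 : c0 * (5334 * 5334 : ZMod 32003) + c1 * (5334 * (-5333) : ZMod 32003) + c2 * (5334 * 1 : ZMod 32003) + c3 * (5334 * (-10) : ZMod 32003) + c4 * ((-5333) * (-5333) : ZMod 32003) + c5 * ((-5333) * 1 : ZMod 32003) + c6 * ((-5333) * (-10) : ZMod 32003) + c7 * (1 * 1 : ZMod 32003) + c8 * (1 * (-10) : ZMod 32003) + c9 * ((-10) * (-10) : ZMod 32003) = 0 := by
    have h := hvan ![5334, (-5333), 1, (-10)] (by simp [twelveNodes])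
    rw [evalrep] at h
    exact h
  have E11 : c0 * (16001 * 16001 : ZMod 32003) + c1 * (16001 * (-16001) : ZMod 32003) + c2 * (16001 * 1 : ZMod 32003) + c3 * (16001 * 22 : ZMod 32003) + c4 * ((-16001) * (-16001) : ZMod 32003) + c5 * ((-16001) * 1 : ZMod 32003) + c6 * ((-16001) * 22 : ZMod 32003) + c7 * (1 * 1 : ZMod 32003) + c8 * (1 * 22 : ZMod 32003) + c9 * (22 * 22 : ZMod 32003) = 0 := by
    have h := hvan ![16001, (-16001), 1, 22] (by simp [twelveNodes])
    rw [evalrep] at h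
    exact h
  have hp0 : (32003 : ZMod 32003) = 0 := by decide
  have hz0 : c0 = 0 := by
    linear_combination (28907 : ZMod 32003) * E0 + (922 : ZMod 32003) * E1 + (6001 : ZMod 32003) * E2 + (28808 : ZMod 32003) * E3 + (3212 : ZMod 32003) * E4 + (25603 : ZMod 32003) * E5 + (15946 : ZMod 32003) * E6 + (15591 : ZMod 32003) * E7 + (14000 : ZMod 32003) * E8 + (17929 : ZMod 32003) * E10 + ((-468649548 : ZMod 32003) * c0 + (-126384854 : ZMod 32003) * c1 + (13917 : ZMod 32003) * c2 + (1842146 : ZMod 32003) * c3 + (-468250981 : ZMod 32003) * c4 + (6739 : ZMod 32003) * c5 + (29006 : ZMod 32003) * c6 + (-4 : ZMod 32003) * c7 + (-448 : ZMod 32003) * c8 + (-5841321 : ZMod 32003) * c9) * hp0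
  have hz1 : c1 = 0 := by
    linear_combination (288 : ZMod 32003) * E0 + (27508 : ZMod 32003) * E1 + (15997 : ZMod 32003) * E4 + (22403 : ZMod 32003) * E5 + (18 : ZMod 32003) * E6 + (22403 : ZMod 32003) * E7 + (7680 : ZMod 32003) * E10 + ((-233935016 : ZMod 32003) * c0 + (-50054257 : ZMod 32003) * c1 + (7112 : ZMod 32003) * c2 + (43696128 : ZMod 32003) * c3 + (-223052737 : ZMod 32003) * c4 + (-8327 : ZMod 32003) * c5 + (-57670 : ZMod 32003) * c6 + (-3 : ZMod 32003) * c7 + (-12254 : ZMod 32003) * c8 + (-174247660 : ZMod 32003) * c9) * hp0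
  have hz2 : c2 = 0 := by
    linear_combination (31503 : ZMod 32003) * E0 + (5003 : ZMod 32003) * E1 + (29003 : ZMod 32003) * E2 + (20000 : ZMod 32003) * E4 + (20000 : ZMod 32003) * E5 + (27003 : ZMod 32003) * E7 + (27003 : ZMod 32003) * E8 + ((-336272585 : ZMod 32003) * c0 + (0 : ZMod 32003) * c1 + (-4112 : ZMod 32003) * c2 + (8065706 : ZMod 32003) * c3 + (-334305122 : ZMod 32003) * c4 + (0 : ZMod 32003) * c5 + (0 : ZMod 32003) * c6 + (-4 : ZMod 32003) * c7 + (-2292 : ZMod 32003) * c8 + (-31693653 : ZMod 32003) * c9) * hp0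
  have hz3 : c3 = 0 := by
    linear_combination (31989 : ZMod 32003) * E0 + (19583 : ZMod 32003) * E1 + (21502 : ZMod 32003) * E2 + (9601 : ZMod 32003) * E3 + (28403 : ZMod 32003) * E4 + (31603 : ZMod 32003) * E5 + (16000 : ZMod 32003) * E6 + (2100 : ZMod 32003) * E7 + (500 : ZMod 32003) * E8 + (30723 : ZMod 32003) * E10 + ((-348720041 : ZMod 32003) * c0 + (-29584498 : ZMod 32003) * c1 + (23659 : ZMod 32003) * c2 + (31415357 : ZMod 32003) * c3 + (-340924227 : ZMod 32003) * c4 + (5653 : ZMod 32003) * c5 + (-37330 : ZMod 32003) * c6 + (-5 : ZMod 32003) * c7 + (-8774 : ZMod 32003) * c8 + (-124049371 : ZMod 32003) * c9) * hp0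
  have hz4 : c4 = 0 := by
    linear_combination (360 : ZMod 32003) * E0 + (19440 : ZMod 32003) * E1 + (22002 : ZMod 32003) * E2 + (16001 : ZMod 32003) * E3 + (28803 : ZMod 32003) * E5 + (16003 : ZMod 32003) * E6 + (18803 : ZMod 32003) * E7 + (30003 : ZMod 32003) * E8 + (8960 : ZMod 32003) * E10 + ((-433872229 : ZMod 32003) * c0 + (36436552 : ZMod 32003) * c1 + (4667 : ZMod 32003) * c2 + (31021234 : ZMod 32003) * c3 + (-426185380 : ZMod 32003) * c4 + (959 : ZMod 32003) * c5 + (-67214 : ZMod 32003) * c6 + (-5 : ZMod 32003) * c7 + (-8710 : ZMod 32003) * c8 + (-123143372 : ZMod 32003) * c9) * hp0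
  have hz5 : c5 = 0 := by
    linear_combination (31875 : ZMod 32003) * E0 + (26889 : ZMod 32003) * E1 + (12003 : ZMod 32003) * E4 + (13601 : ZMod 32003) * E5 + (31995 : ZMod 32003) * E6 + (31603 : ZMod 32003) * E7 + (26002 : ZMod 32003) * E8 + (17922 : ZMod 32003) * E10 + ((-350902524 : ZMod 32003) * c0 + (30137100 : ZMod 32003) * c1 + (-5334 : ZMod 32003) * c2 + (42725340 : ZMod 32003) * c3 + (-340293413 : ZMod 32003) * c4 + (-4746 : ZMod 32003) * c5 + (-115714 : ZMod 32003) * c6 + (-5 : ZMod 32003) * c7 + (-11986 : ZMod 32003) * c8 + (-170326805 : ZMod 32003) * c9) * hp0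
  have hz6 : c6 = 0 := by
    linear_combination (16 : ZMod 32003) * E0 + (8640 : ZMod 32003) * E1 + (2000 : ZMod 32003) * E4 + (10801 : ZMod 32003) * E5 + (1 : ZMod 32003) * E6 + (31803 : ZMod 32003) * E7 + (21002 : ZMod 32003) * E8 + (21762 : ZMod 32003) * E10 + ((-256064004 : ZMod 32003) * c0 + (12225528 : ZMod 32003) * c1 + (-16002 : ZMod 32003) * c2 + (13729716 : ZMod 32003) * c3 + (-252669556 : ZMod 32003) * c4 + (-2908 : ZMod 32003) * c5 + (-84537 : ZMod 32003) * c6 + (-3 : ZMod 32003) * c7 + (-3846 : ZMod 32003) * c8 + (-54729596 : ZMod 32003) * c9) * hp0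
  have hz7 : c7 = 0 := by
    linear_combination (31899 : ZMod 32003) * E0 + (10117 : ZMod 32003) * E1 + (19224 : ZMod 32003) * E2 + (20980 : ZMod 32003) * E3 + (799 : ZMod 32003) * E4 + (10401 : ZMod 32003) * E5 + (16007 : ZMod 32003) * E6 + (17401 : ZMod 32003) * E7 + (19002 : ZMod 32003) * E8 + (14082 : ZMod 32003) * E10 + ((-367874224 : ZMod 32003) * c0 + (-101250700 : ZMod 32003) * c1 + (3534 : ZMod 32003) * c2 + (16241300 : ZMod 32003) * c3 + (-363867891 : ZMod 32003) * c4 + (7501 : ZMod 32003) * c5 + (42290 : ZMod 32003) * c6 + (-4 : ZMod 32003) * c7 + (-4550 : ZMod 32003) * c8 + (-64087237 : ZMod 32003) * c9) * hp0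
  have hz8 : c8 = 0 := by
    linear_combination (31993 : ZMod 32003) * E0 + (27143 : ZMod 32003) * E1 + (26058 : ZMod 32003) * E2 + (6045 : ZMod 32003) * E3 + (20402 : ZMod 32003) * E4 + (10801 : ZMod 32003) * E5 + (16001 : ZMod 32003) * E6 + (10301 : ZMod 32003) * E7 + (21502 : ZMod 32003) * E8 + (21762 : ZMod 32003) * E10 + ((-316715041 : ZMod 32003) * c0 + (-9093048 : ZMod 32003) * c1 + (4879 : ZMod 32003) * c2 + (43181946 : ZMod 32003) * c3 + (-305977308 : ZMod 32003) * c4 + (10916 : ZMod 32003) * c5 + (20980 : ZMod 32003) * c6 + (-5 : ZMod 32003) * c7 + (-12135 : ZMod 32003) * c8 + (-171937767 : ZMod 32003) * c9) * hp0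
  have hz9 : c9 = 0 := by
    linear_combination (1 : ZMod 32003) * E0 + ((0 : ZMod 32003) * c0 + (0 : ZMod 32003) * c1 + (0 : ZMod 32003) * c2 + (0 : ZMod 32003) * c3 + (0 : ZMod 32003) * c4 + (0 : ZMod 32003) * c5 + (0 : ZMod 32003) * c6 + (0 : ZMod 32003) * c7 + (0 : ZMod 32003) * c8 + (0 : ZMod 32003) * c9) * hp0
  rw [hrep, hz0, hz1, hz2, hz3, hz4, hz5, hz6, hz7, hz8, hz9]
  simp
end
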